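/- Let γ ∈ (0,1), let f be locally Lipschitz and non-decreasing on (0, ∞), let u₀ > 0 with f(u₀) > 0, and let u be the unique solution of D_c^γ u = f(u), u(0) = u₀, on its maximal interval [0, T_b). Then u is non-decreasing on (0, T_b) and lim_{t→T_b⁻} u(t) = +∞ (where T_b ∈ (0, ∞]; if T_b = ∞ this means u(t) → ∞ as t → ∞). -/

import Mathlib

open MeasureTheory Real Filter Set Asymptotics
open scoped ENNReal Topology

/-- `u` is a solution of the Volterra integral form of the fractional ODE
`D_c^γ u = f(u)`, `u(0) = u₀`, on the interval `[0, T)` (with `T ∈ (0,∞]`),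
taking values in the set `D`. -/
noncomputable def IsSolUpTo (γ : ℝ) (f : ℝ → ℝ) (D : Set ℝ) (u₀ : ℝ) (u : ℝ → ℝ)
    (T : ℝ≥0∞) : Prop :=
  u 0 = u₀ ∧
  ContinuousOn u {t : ℝ | 0 ≤ t ∧ ENNReal.ofReal t < T} ∧
  (∀ t : ℝ, 0 ≤ t → ENNReal.ofReal t < T → u t ∈ D) ∧
  (∀ t : ℝ, 0 ≤ t → ENNReal.ofReal t < T →
    u t = u₀ + (1 / Real.Gamma γ) * ∫ s in (0:ℝ)..t, (t - s) ^ (γ - 1) * f (u s))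

/-- The maximal existence time `T_b`: the supremum of all `T` such that a solution
exists on `[0, T)`. -/
noncomputable def maxTime (γ : ℝ) (f : ℝ → ℝ) (D : Set ℝ) (u₀ : ℝ) : ℝ≥0∞ :=
  sSup {T : ℝ≥0∞ | ∃ u : ℝ → ℝ, IsSolUpTo γ f D u₀ u T}

/-!
Comparison with translates gives monotonicity. If `u (· + h) ≥ u` on `[0, σ)`, the Volterra
equation writes `u (σ + h) - u σ` as `1 / Γ(γ)` times the kernel integral of `f ∘ u` over `[0, h]`,
which is positive because `u ≥ u₀` and `f u₀ > 0`, plus the kernel integral of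
`f (u (· + h)) - f u ≥ 0` over `[0, σ]`; so `u (· + h) - u` has no first nonpositive point. The
same argument for `u - u₀` gives `u ≥ u₀`, hence `u t ≥ u₀ + f u₀ t ^ γ / Γ(γ + 1)`, which settles
the case `T_b = ∞`. If `T_b < ∞` and `u` were bounded, the monotone `u` would have a positive limit
at `T_b`; glued in, it gives a solution on `[0, T_b]`, and a contraction argument in
`C([0, T_b + ε])`, after replacing `f` by a globally Lipschitz function that agrees with it near
the values of `u`, continues it past `T_b`, contradicting maximality.
-/

open intervalIntegral
open scoped NNReal

section Kernel

variable {γ t a b : ℝ}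

lemma intervalIntegrable_rpow_sub_mul (hγ : 0 < γ) {g : ℝ → ℝ} (hg : ContinuousOn g (uIcc a b)) :
    IntervalIntegrable (fun s => (t - s) ^ (γ - 1) * g s) volume a b := by
  have hk : IntervalIntegrable (fun s => (t - s) ^ (γ - 1)) volume (t - (t - a)) (t - (t - b)) :=
    (intervalIntegrable_rpow' (by linarith)).comp_sub_left t
  simp only [sub_sub_cancel] at hk
  exact hk.mul_continuousOn hg

lemma intervalIntegrable_rpow_sub (hγ : 0 < γ) :
    IntervalIntegrable (fun s => (t - s) ^ (γ - 1)) volume a b := by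
  simpa using intervalIntegrable_rpow_sub_mul (t := t) hγ (continuousOn_const (c := (1 : ℝ)))

lemma integral_rpow_sub (hγ : 0 < γ) :
    ∫ s in a..b, (t - s) ^ (γ - 1) = ((t - a) ^ γ - (t - b) ^ γ) / γ := by
  rw [intervalIntegral.integral_comp_sub_left (fun x => x ^ (γ - 1)),
    integral_rpow (Or.inl (by linarith)), sub_add_cancel]

lemma abs_integral_mul_le_of_Ioo {k g : ℝ → ℝ} {M : ℝ} (hab : a ≤ b)
    (hkg : IntervalIntegrable (fun s => k s * g s) volume a b)
    (hk : IntervalIntegrable k volume a b) (hk0 : ∀ s ∈ Ioo a b, 0 ≤ k s)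
    (hg : ∀ s ∈ Ioo a b, |g s| ≤ M) :
    |∫ s in a..b, k s * g s| ≤ M * ∫ s in a..b, k s := by
  rw [← intervalIntegral.integral_const_mul]
  refine (abs_integral_le_integral_abs hab).trans
    (integral_mono_on_of_le_Ioo hab hkg.abs (hk.const_mul M) fun s hs => ?_)
  rw [abs_mul, abs_of_nonneg (hk0 s hs), mul_comm]
  exact mul_le_mul_of_nonneg_right (hg s hs) (hk0 s hs)

end Kernel

/-- The Riemann–Liouville integral of order `γ`, without the normalisation `1 / Γ(γ)`. -/
noncomputable def rlIntegral (γ : ℝ) (g : ℝ → ℝ) (t : ℝ) : ℝ :=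
  ∫ s in (0 : ℝ)..t, (t - s) ^ (γ - 1) * g s

section RLIntegral

variable {γ t : ℝ} {g : ℝ → ℝ}

lemma rlIntegral_congr {g₁ g₂ : ℝ → ℝ} (ht : 0 ≤ t) (h : EqOn g₁ g₂ (Icc 0 t)) :
    rlIntegral γ g₁ t = rlIntegral γ g₂ t :=
  integral_congr fun s hs => by rw [uIcc_of_le ht] at hs; simp only [h hs]

lemma intervalIntegrable_rpow_sub_mul_of_Icc (hγ : 0 < γ) {t' : ℝ} (ht : 0 ≤ t)
    (hg : ContinuousOn g (Icc 0 t)) :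
    IntervalIntegrable (fun s => (t' - s) ^ (γ - 1) * g s) volume 0 t :=
  intervalIntegrable_rpow_sub_mul hγ (by rwa [uIcc_of_le ht])

lemma mul_rpow_div_le_rlIntegral (hγ : 0 < γ) (ht : 0 ≤ t) (hg : ContinuousOn g (Icc 0 t))
    {C : ℝ} (hC : ∀ s ∈ Icc 0 t, C ≤ g s) : C * (t ^ γ / γ) ≤ rlIntegral γ g t := by
  have hint := integral_rpow_sub (t := t) (a := 0) (b := t) hγ
  rw [sub_zero, sub_self, zero_rpow hγ.ne', sub_zero] at hint
  rw [← hint, ← intervalIntegral.integral_const_mul]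
  refine integral_mono_on ht ((intervalIntegrable_rpow_sub hγ).const_mul C)
    (intervalIntegrable_rpow_sub_mul_of_Icc hγ ht hg) fun s hs => ?_
  rw [mul_comm]
  exact mul_le_mul_of_nonneg_left (hC s hs) (rpow_nonneg (by linarith [hs.2]) _)

lemma rlIntegral_pos (hγ : 0 < γ) (ht : 0 < t) (hg : ContinuousOn g (Icc 0 t))
    (hpos : ∀ s ∈ Ioo 0 t, 0 < g s) : 0 < rlIntegral γ g t :=
  intervalIntegral_pos_of_pos_on (intervalIntegrable_rpow_sub_mul_of_Icc hγ ht.le hg)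
    (fun s hs => mul_pos (rpow_pos_of_pos (by linarith [hs.2]) _) (hpos s hs)) ht

lemma rlIntegral_nonneg (hγ : 0 < γ) (ht : 0 ≤ t) (hg : ContinuousOn g (Icc 0 t))
    (hnonneg : ∀ s ∈ Ioo 0 t, 0 ≤ g s) : 0 ≤ rlIntegral γ g t := by
  simpa [rlIntegral] using integral_mono_on_of_le_Ioo ht intervalIntegrable_const
    (intervalIntegrable_rpow_sub_mul_of_Icc hγ ht hg)
    fun s hs => mul_nonneg (rpow_nonneg (by linarith [hs.2]) _) (hnonneg s hs)

lemma rlIntegral_sub (hγ : 0 < γ) (ht : 0 ≤ t) {g₁ g₂ : ℝ → ℝ} (hg₁ : ContinuousOn g₁ (Icc 0 t))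
    (hg₂ : ContinuousOn g₂ (Icc 0 t)) :
    rlIntegral γ g₁ t - rlIntegral γ g₂ t = rlIntegral γ (fun s => g₁ s - g₂ s) t := by
  rw [rlIntegral, rlIntegral, rlIntegral, ← integral_sub
    (intervalIntegrable_rpow_sub_mul_of_Icc hγ ht hg₁)
    (intervalIntegrable_rpow_sub_mul_of_Icc hγ ht hg₂)]
  exact integral_congr fun s _ => by ring

lemma abs_rlIntegral_sub_le (hγ : γ ∈ Ioo (0 : ℝ) 1) {t₁ t₂ M : ℝ} (h0 : 0 ≤ t₁)
    (h12 : t₁ ≤ t₂) (hg : ContinuousOn g (Icc 0 t₂)) (hM : ∀ s ∈ Icc 0 t₂, |g s| ≤ M) :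
    |rlIntegral γ g t₂ - rlIntegral γ g t₁| ≤ 2 * M / γ * (t₂ - t₁) ^ γ := by
  have hγ0 := hγ.1
  have hg₁ : ContinuousOn g (Icc 0 t₁) := hg.mono (Icc_subset_Icc_right h12)
  have hg₂ : ContinuousOn g (uIcc t₁ t₂) :=
    hg.mono (by rw [uIcc_of_le h12]; exact Icc_subset_Icc_left h0)
  have i₂ := intervalIntegrable_rpow_sub_mul_of_Icc (t' := t₂) hγ0 h0 hg₁
  have i₁ := intervalIntegrable_rpow_sub_mul_of_Icc (t' := t₁) hγ0 h0 hg₁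
  set k : ℝ → ℝ := fun s => (t₁ - s) ^ (γ - 1) - (t₂ - s) ^ (γ - 1)
  have hk : IntervalIntegrable k volume 0 t₁ :=
    (intervalIntegrable_rpow_sub hγ0).sub (intervalIntegrable_rpow_sub hγ0)
  have hsplit : rlIntegral γ g t₂ - rlIntegral γ g t₁ =
      (∫ s in (0 : ℝ)..t₁, k s * -g s) + ∫ s in t₁..t₂, (t₂ - s) ^ (γ - 1) * g s := by
    have e : ∫ s in (0 : ℝ)..t₁, k s * -g s = (∫ s in (0 : ℝ)..t₁, (t₂ - s) ^ (γ - 1) * g s) -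
        ∫ s in (0 : ℝ)..t₁, (t₁ - s) ^ (γ - 1) * g s := by
      rw [← integral_sub i₂ i₁]
      exact integral_congr fun s _ => by ring
    rw [e, rlIntegral, rlIntegral,
      ← integral_add_adjacent_intervals i₂ (intervalIntegrable_rpow_sub_mul hγ0 hg₂)]
    ring
  have hfirst : |∫ s in (0 : ℝ)..t₁, k s * -g s| ≤ M / γ * (t₂ - t₁) ^ γ := by
    refine (abs_integral_mul_le_of_Ioo (g := fun s => -g s) h0
      (hk.mul_continuousOn (by rw [uIcc_of_le h0]; exact hg₁.neg)) hk (fun s hs => ?_)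
      fun s hs => by rw [abs_neg]; exact hM s ⟨hs.1.le, by linarith [hs.2]⟩).trans ?_
    · exact sub_nonneg.2 (rpow_le_rpow_of_nonpos (by linarith [hs.2]) (by linarith)
        (by linarith [hγ.2]))
    rw [integral_sub (intervalIntegrable_rpow_sub hγ0) (intervalIntegrable_rpow_sub hγ0),
      integral_rpow_sub hγ0, integral_rpow_sub hγ0, sub_self, zero_rpow hγ0.ne']
    have hM0 : 0 ≤ M := (abs_nonneg _).trans (hM 0 ⟨le_rfl, h0.trans h12⟩)
    have hmono : t₁ ^ γ ≤ t₂ ^ γ := rpow_le_rpow h0 h12 hγ0.le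
    have : M * ((t₁ - 0) ^ γ / γ - ((t₂ - 0) ^ γ - (t₂ - t₁) ^ γ) / γ) =
        M / γ * (t₂ - t₁) ^ γ - M / γ * (t₂ ^ γ - t₁ ^ γ) := by simp only [sub_zero]; ring
    rw [sub_zero, this]
    exact sub_le_self _ (mul_nonneg (div_nonneg hM0 hγ0.le) (sub_nonneg.2 hmono))
  have hsecond : |∫ s in t₁..t₂, (t₂ - s) ^ (γ - 1) * g s| ≤ M / γ * (t₂ - t₁) ^ γ := by
    refine (abs_integral_mul_le_of_Ioo h12 (intervalIntegrable_rpow_sub_mul hγ0 hg₂)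
      (intervalIntegrable_rpow_sub hγ0) (fun s hs => rpow_nonneg (by linarith [hs.2]) _)
      fun s hs => hM s ⟨by linarith [hs.1], hs.2.le⟩).trans_eq ?_
    rw [integral_rpow_sub hγ0, sub_self, zero_rpow hγ0.ne', sub_zero]
    ring
  rw [hsplit, show 2 * M / γ * (t₂ - t₁) ^ γ = M / γ * (t₂ - t₁) ^ γ + M / γ * (t₂ - t₁) ^ γ by
    ring]
  exact (abs_add_le _ _).trans (add_le_add hfirst hsecond)

lemma continuousOn_rlIntegral (hγ : γ ∈ Ioo (0 : ℝ) 1) {A : ℝ} (hg : ContinuousOn g (Icc 0 A)) :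
    ContinuousOn (rlIntegral γ g) (Icc 0 A) := by
  obtain ⟨M, hM⟩ := isCompact_Icc.exists_bound_of_continuousOn hg
  have hholder : ∀ x ∈ Icc 0 A, ∀ y ∈ Icc 0 A,
      dist (rlIntegral γ g y) (rlIntegral γ g x) ≤ 2 * M / γ * |y - x| ^ γ := by
    intro x hx y hy
    rw [dist_eq]
    rcases le_total x y with hxy | hyx
    · rw [abs_of_nonneg (sub_nonneg.2 hxy)]
      exact abs_rlIntegral_sub_le hγ hx.1 hxy (hg.mono (Icc_subset_Icc_right hy.2))
        fun s hs => hM s ⟨hs.1, hs.2.trans hy.2⟩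
    · rw [abs_sub_comm, abs_sub_comm y, abs_of_nonneg (sub_nonneg.2 hyx)]
      exact abs_rlIntegral_sub_le hγ hy.1 hyx (hg.mono (Icc_subset_Icc_right hx.2))
        fun s hs => hM s ⟨hs.1, hs.2.trans hx.2⟩
  intro x hx
  rw [ContinuousWithinAt, tendsto_iff_dist_tendsto_zero]
  have hlim : Tendsto (fun y => 2 * M / γ * |y - x| ^ γ) (𝓝[Icc 0 A] x) (𝓝 0) := by
    have : Continuous (fun y => 2 * M / γ * |y - x| ^ γ) := continuous_const.mul
      ((continuous_id.sub continuous_const).abs.rpow_const fun _ => Or.inr hγ.1.le)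
    simpa [zero_rpow hγ.1.ne'] using (this.tendsto x).mono_left nhdsWithin_le_nhds
  exact squeeze_zero' (Eventually.of_forall fun _ => dist_nonneg)
    (eventually_nhdsWithin_of_forall fun y hy => hholder x hx y hy) hlim

lemma abs_rlIntegral_le_of_eqOn_zero (hγ : 0 < γ) {T₀ L : ℝ} (hT₀ : 0 ≤ T₀) (ht : T₀ ≤ t)
    (hg : ContinuousOn g (Icc 0 t)) (hzero : EqOn g 0 (Icc 0 T₀))
    (hL : ∀ s ∈ Icc T₀ t, |g s| ≤ L) :
    |rlIntegral γ g t| ≤ L * ((t - T₀) ^ γ / γ) := by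
  have hg₂ : ContinuousOn g (uIcc T₀ t) :=
    hg.mono (by rw [uIcc_of_le ht]; exact Icc_subset_Icc_left hT₀)
  have hpast : ∫ s in (0 : ℝ)..T₀, (t - s) ^ (γ - 1) * g s = 0 := by
    refine (integral_congr (g := fun _ => (0 : ℝ)) fun s hs => ?_).trans integral_zero
    rw [uIcc_of_le hT₀] at hs
    simp [hzero hs]
  rw [rlIntegral, ← integral_add_adjacent_intervals (intervalIntegrable_rpow_sub_mul_of_Icc hγ hT₀
    (hg.mono (Icc_subset_Icc_right ht))) (intervalIntegrable_rpow_sub_mul hγ hg₂), hpast, zero_add]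
  refine (abs_integral_mul_le_of_Ioo ht (intervalIntegrable_rpow_sub_mul hγ hg₂)
    (intervalIntegrable_rpow_sub hγ) (fun s hs => rpow_nonneg (by linarith [hs.2]) _)
    fun s hs => hL s ⟨hs.1.le, hs.2.le⟩).trans_eq ?_
  rw [integral_rpow_sub hγ, sub_self, zero_rpow hγ.ne', sub_zero]

lemma abs_rlIntegral_comp_sub_le (hγ : 0 < γ) {F : ℝ → ℝ} {K : ℝ≥0} (hF : LipschitzWith K F)
    {T₀ d : ℝ} (hT₀ : 0 ≤ T₀) (ht : T₀ ≤ t) {v₁ v₂ : ℝ → ℝ} (hv₁ : Continuous v₁)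
    (hv₂ : Continuous v₂) (heq : EqOn v₁ v₂ (Icc 0 T₀)) (hd : ∀ s, |v₁ s - v₂ s| ≤ d) :
    |rlIntegral γ (F ∘ v₁) t - rlIntegral γ (F ∘ v₂) t| ≤ K * d * ((t - T₀) ^ γ / γ) := by
  have hF₁ := (hF.continuous.comp hv₁).continuousOn (s := Icc 0 t)
  have hF₂ := (hF.continuous.comp hv₂).continuousOn (s := Icc 0 t)
  rw [rlIntegral_sub hγ (hT₀.trans ht) hF₁ hF₂]
  refine abs_rlIntegral_le_of_eqOn_zero hγ hT₀ ht (hF₁.sub hF₂)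
    (fun s hs => by simp [heq hs]) fun s _ => ?_
  rw [← dist_eq]
  exact (hF.dist_le_mul _ _).trans (mul_le_mul_of_nonneg_left (hd s) K.2)

lemma rlIntegral_lt_rlIntegral_add (hγ : 0 < γ) {σ h : ℝ} (hσ : 0 ≤ σ) (hh : 0 < h)
    (hg : ContinuousOn g (Icc 0 (σ + h))) (hpos : ∀ s ∈ Ioo 0 h, 0 < g s)
    (hincr : ∀ τ ∈ Ioo 0 σ, g τ ≤ g (τ + h)) :
    rlIntegral γ g σ < rlIntegral γ g (σ + h) := by
  have hg₁ : ContinuousOn g (Icc 0 h) := hg.mono (Icc_subset_Icc_right (by linarith))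
  have hg₂ : ContinuousOn g (uIcc h (σ + h)) :=
    hg.mono (by rw [uIcc_of_le (by linarith)]; exact Icc_subset_Icc_left hh.le)
  have hg₀ : ContinuousOn g (Icc 0 σ) := hg.mono (Icc_subset_Icc_right (by linarith))
  have hgh : ContinuousOn (fun τ => g (τ + h)) (Icc 0 σ) := hg.comp
    (continuous_add_const h).continuousOn fun τ hτ => ⟨by linarith [hτ.1], by linarith [hτ.2]⟩
  have hshift : rlIntegral γ (fun τ => g (τ + h)) σ =
      ∫ s in h..σ + h, (σ + h - s) ^ (γ - 1) * g s := by
    have := integral_comp_add_right (fun s => (σ + h - s) ^ (γ - 1) * g s) (a := 0) (b := σ) h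
    rw [zero_add] at this
    rw [← this]
    simp only [rlIntegral, add_sub_add_right_eq_sub]
  have hsplit : rlIntegral γ g (σ + h) = (∫ s in (0 : ℝ)..h, (σ + h - s) ^ (γ - 1) * g s) +
      rlIntegral γ (fun τ => g (τ + h)) σ := by
    rw [hshift, rlIntegral, integral_add_adjacent_intervals
      (intervalIntegrable_rpow_sub_mul_of_Icc hγ hh.le hg₁)
      (intervalIntegrable_rpow_sub_mul hγ hg₂)]
  have hfirst : 0 < ∫ s in (0 : ℝ)..h, (σ + h - s) ^ (γ - 1) * g s :=
    intervalIntegral_pos_of_pos_on (intervalIntegrable_rpow_sub_mul_of_Icc hγ hh.le hg₁)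
      (fun s hs => mul_pos (rpow_pos_of_pos (by linarith [hs.2]) _) (hpos s hs)) hh
  have hsecond : 0 ≤ rlIntegral γ (fun τ => g (τ + h)) σ - rlIntegral γ g σ := by
    rw [rlIntegral_sub hγ hσ hgh hg₀]
    exact rlIntegral_nonneg hγ hσ (hgh.sub hg₀) fun τ hτ => sub_nonneg.2 (hincr τ hτ)
  linarith

end RLIntegral

lemma pos_of_forall_nonneg_Ico_imp_pos {φ : ℝ → ℝ} {b : ℝ} (hφ : ContinuousOn φ (Icc 0 b))
    (h0 : 0 ≤ φ 0) (hsmall : ∀ᶠ t in 𝓝[>] 0, 0 < φ t)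
    (hstep : ∀ t ∈ Ioc 0 b, (∀ s ∈ Ico 0 t, 0 ≤ φ s) → 0 < φ t) :
    ∀ t ∈ Ioc 0 b, 0 < φ t := by
  obtain ⟨δ, hδ, hpos⟩ := mem_nhdsGT_iff_exists_Ioo_subset.1 hsmall
  by_contra! hneg
  obtain ⟨t₀, ht₀, hφt₀⟩ := hneg
  have hδt₀ : δ ≤ t₀ := not_lt.1 fun h => (hpos ⟨ht₀.1, h⟩ : 0 < φ t₀).not_ge hφt₀
  -- a first nonpositive point of `φ` exists, as the least element of a compact set
  have hE : IsCompact (Icc δ b ∩ φ ⁻¹' Iic 0) := isCompact_Icc.of_isClosed_subset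
    ((hφ.mono (Icc_subset_Icc_left (le_of_lt hδ))).preimage_isClosed_of_isClosed isClosed_Icc
      isClosed_Iic) inter_subset_left
  obtain ⟨m, ⟨hm, hφm⟩, hleast⟩ := hE.exists_isLeast ⟨t₀, ⟨hδt₀, ht₀.2⟩, hφt₀⟩
  refine (hstep m ⟨lt_of_lt_of_le hδ hm.1, hm.2⟩ fun s hs => ?_).not_ge hφm
  rcases hs.1.eq_or_lt with rfl | hs0
  · exact h0
  rcases lt_or_ge s δ with hsδ | hδs
  · exact (hpos ⟨hs0, hsδ⟩ : 0 < φ s).le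
  · by_contra! hφs
    exact (hleast ⟨⟨hδs, hs.2.le.trans hm.2⟩, hφs.le⟩).not_gt hs.2

lemma Icc_subset_setOf_ofReal_lt {T : ℝ≥0∞} {b : ℝ} (hb : ENNReal.ofReal b < T) :
    Icc 0 b ⊆ {t : ℝ | 0 ≤ t ∧ ENNReal.ofReal t < T} :=
  fun _ hs => ⟨hs.1, (ENNReal.ofReal_le_ofReal hs.2).trans_lt hb⟩

namespace IsSolUpTo

variable {γ u₀ b : ℝ} {f u : ℝ → ℝ} {D : Set ℝ} {T : ℝ≥0∞}

lemma continuousOn_Icc (hu : IsSolUpTo γ f D u₀ u T) (hb : ENNReal.ofReal b < T) :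
    ContinuousOn u (Icc 0 b) :=
  hu.2.1.mono (Icc_subset_setOf_ofReal_lt hb)

lemma mem_of_mem_Icc (hu : IsSolUpTo γ f D u₀ u T) (hb : ENNReal.ofReal b < T) {t : ℝ}
    (ht : t ∈ Icc 0 b) : u t ∈ D :=
  hu.2.2.1 t ht.1 (Icc_subset_setOf_ofReal_lt hb ht).2

lemma eq_of_mem_Icc (hu : IsSolUpTo γ f D u₀ u T) (hb : ENNReal.ofReal b < T) {t : ℝ}
    (ht : t ∈ Icc 0 b) : u t = u₀ + 1 / Gamma γ * rlIntegral γ (f ∘ u) t :=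
  hu.2.2.2 t ht.1 (Icc_subset_setOf_ofReal_lt hb ht).2

lemma continuousOn_comp_Icc (hu : IsSolUpTo γ f D u₀ u T) (hb : ENNReal.ofReal b < T)
    (hfc : ContinuousOn f D) : ContinuousOn (f ∘ u) (Icc 0 b) :=
  hfc.comp (hu.continuousOn_Icc hb) fun _ => hu.mem_of_mem_Icc hb

variable (hγ : 0 < γ) (hfc : ContinuousOn f (Ioi 0)) (hmono : MonotoneOn f (Ioi 0))
  (hfu₀ : 0 < f u₀) (hu : IsSolUpTo γ f (Ioi 0) u₀ u T)
include hγ hfc hmono hfu₀ hu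

lemma lt_apply (hb : ENNReal.ofReal b < T) (hb0 : 0 < b) : u₀ < u b := by
  have hg := hu.continuousOn_comp_Icc hb hfc
  have hu₀ : u₀ ∈ Ioi 0 := hu.1 ▸ hu.mem_of_mem_Icc hb ⟨le_rfl, hb0.le⟩
  have hpos : ∀ t ∈ Ioc 0 b, (∀ s ∈ Ioo 0 t, 0 < f (u s)) → 0 < u t - u₀ := fun t ht hpos => by
    rw [hu.eq_of_mem_Icc hb ⟨ht.1.le, ht.2⟩, add_sub_cancel_left]
    exact mul_pos (one_div_pos.2 (Gamma_pos_of_pos hγ))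
      (rlIntegral_pos hγ ht.1 (hg.mono (Icc_subset_Icc_right ht.2)) hpos)
  refine sub_pos.1 (pos_of_forall_nonneg_Ico_imp_pos (φ := fun t => u t - u₀)
    ((hu.continuousOn_Icc hb).sub continuousOn_const)
    (by simp [hu.1]) ?_ (fun t ht hprev => hpos t ht fun s hs => ?_) b ⟨hb0, le_rfl⟩)
  · have hnear : ∀ᶠ s in 𝓝[Icc 0 b] 0, 0 < f (u s) :=
      (hg 0 ⟨le_rfl, hb0.le⟩).eventually (lt_mem_nhds (by simpa [hu.1] using hfu₀))
    rw [nhdsWithin_Icc_eq_nhdsGE hb0] at hnear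
    obtain ⟨δ, hδ, hsub⟩ := mem_nhdsGE_iff_exists_Ico_subset.1 hnear
    refine mem_nhdsGT_iff_exists_Ioo_subset.2 ⟨min δ b, lt_min hδ hb0, fun t ht => ?_⟩
    exact hpos t ⟨ht.1, ht.2.le.trans (min_le_right _ _)⟩
      fun s hs => hsub ⟨hs.1.le, hs.2.trans (ht.2.trans_le (min_le_left _ _))⟩
  · exact hfu₀.trans_le (hmono hu₀ (hu.mem_of_mem_Icc hb ⟨hs.1.le, hs.2.le.trans ht.2⟩)
      (sub_nonneg.1 (hprev s ⟨hs.1.le, hs.2⟩)))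

lemma le_apply (hb : ENNReal.ofReal b < T) (hb0 : 0 ≤ b) : u₀ ≤ u b := by
  rcases hb0.eq_or_lt with rfl | hb0
  · exact hu.1.ge
  · exact (hu.lt_apply hγ hfc hmono hfu₀ hb hb0).le

lemma add_le_apply (hb : ENNReal.ofReal b < T) (hb0 : 0 ≤ b) :
    u₀ + 1 / Gamma γ * (f u₀ * (b ^ γ / γ)) ≤ u b := by
  have hu₀ : u₀ ∈ Ioi 0 := hu.1 ▸ hu.mem_of_mem_Icc hb ⟨le_rfl, hb0⟩
  rw [hu.eq_of_mem_Icc hb ⟨hb0, le_rfl⟩]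
  gcongr
  refine mul_rpow_div_le_rlIntegral hγ hb0 (hu.continuousOn_comp_Icc hb hfc) fun s hs => ?_
  exact hmono hu₀ (hu.mem_of_mem_Icc hb hs)
    (hu.le_apply hγ hfc hmono hfu₀ ((ENNReal.ofReal_le_ofReal hs.2).trans_lt hb) hs.1)

lemma lt_apply_add {σ h : ℝ} (hb : ENNReal.ofReal (σ + h) < T) (hσ : 0 ≤ σ) (hh : 0 < h)
    (hprev : ∀ τ ∈ Ioo 0 σ, u τ ≤ u (τ + h)) : u σ < u (σ + h) := by
  have hmem : ∀ s ∈ Icc 0 (σ + h), u s ∈ Ioi 0 := fun s => hu.mem_of_mem_Icc hb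
  have hu₀ : u₀ ∈ Ioi 0 := hu.1 ▸ hmem 0 ⟨le_rfl, by linarith⟩
  rw [hu.eq_of_mem_Icc hb ⟨by linarith, le_rfl⟩, hu.eq_of_mem_Icc hb ⟨hσ, by linarith⟩]
  gcongr
  refine rlIntegral_lt_rlIntegral_add hγ hσ hh (hu.continuousOn_comp_Icc hb hfc)
    (fun s hs => ?_) fun τ hτ => ?_
  · have hs' : s ∈ Icc 0 (σ + h) := ⟨hs.1.le, by linarith [hs.2]⟩
    exact hfu₀.trans_le (hmono hu₀ (hmem s hs')
      (hu.le_apply hγ hfc hmono hfu₀ ((ENNReal.ofReal_le_ofReal hs'.2).trans_lt hb) hs'.1))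
  · exact hmono (hmem τ ⟨hτ.1.le, by linarith [hτ.2]⟩)
      (hmem (τ + h) ⟨by linarith [hτ.1], by linarith [hτ.2]⟩) (hprev τ hτ)

lemma strictMonoOn : StrictMonoOn u {t : ℝ | 0 ≤ t ∧ ENNReal.ofReal t < T} := by
  intro t₁ ht₁ t₂ ht₂ h12
  rcases ht₁.1.eq_or_lt with h0 | h0
  · rw [← h0, hu.1]
    exact hu.lt_apply hγ hfc hmono hfu₀ ht₂.2 (h0 ▸ h12)
  set h := t₂ - t₁ with hh
  have hh0 : 0 < h := sub_pos.2 h12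
  have hc := hu.continuousOn_Icc ht₂.2
  -- compare `u` with its translate `u (· + h)`, which starts above it
  have hφ : ContinuousOn (fun σ => u (σ + h) - u σ) (Icc 0 t₁) :=
    (hc.comp (continuous_add_const h).continuousOn fun τ hτ => ⟨by linarith [hτ.1],
      by linarith [hτ.2]⟩).sub (hc.mono (Icc_subset_Icc_right h12.le))
  have hφ0 : 0 < u (0 + h) - u 0 := by
    rw [zero_add, hu.1]
    exact sub_pos.2 (hu.lt_apply hγ hfc hmono hfu₀
      ((ENNReal.ofReal_le_ofReal (by linarith : h ≤ t₂)).trans_lt ht₂.2) hh0)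
  have hsmall : ∀ᶠ σ in 𝓝[>] 0, 0 < u (σ + h) - u σ := by
    have hnear := (hφ 0 ⟨le_rfl, h0.le⟩).eventually (lt_mem_nhds hφ0)
    rw [nhdsWithin_Icc_eq_nhdsGE h0] at hnear
    exact hnear.filter_mono (nhdsWithin_mono _ Ioi_subset_Ici_self)
  have key := pos_of_forall_nonneg_Ico_imp_pos hφ hφ0.le hsmall (fun σ hσ hprev => sub_pos.2
    (hu.lt_apply_add hγ hfc hmono hfu₀
      ((ENNReal.ofReal_le_ofReal (by linarith [hσ.2])).trans_lt ht₂.2) hσ.1.le hh0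
      fun τ hτ => sub_nonneg.1 (hprev τ ⟨hτ.1.le, hτ.2⟩))) t₁ ⟨h0, le_rfl⟩
  simpa [hh] using key

end IsSolUpTo

lemma LocallyLipschitzOn.exists_lipschitzWith_bounded_eqOn {f : ℝ → ℝ} {s : Set ℝ}
    (hf : LocallyLipschitzOn s f) {a b : ℝ} (hab : a ≤ b) (hsub : Icc a b ⊆ s) :
    ∃ F : ℝ → ℝ, ∃ K : ℝ≥0, ∃ M : ℝ,
      LipschitzWith K F ∧ (∀ x, |F x| ≤ M) ∧ EqOn F f (Icc a b) := by
  obtain ⟨K, hK⟩ := (hf.mono hsub).exists_lipschitzOnWith_of_compact isCompact_Icc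
  obtain ⟨M, hM⟩ := isCompact_Icc.exists_bound_of_continuousOn hK.continuousOn
  refine ⟨IccExtend hab ((Icc a b).domRestrict f), K, M, ?_,
    fun x => hM _ (projIcc a b hab x).2, fun x hx => IccExtend_of_mem _ _ hx⟩
  have h := hK.to_restrict.comp (LipschitzWith.projIcc hab)
  rwa [mul_one] at h

lemma eventually_mul_rpow_lt {γ : ℝ} (hγ : 0 < γ) (C : ℝ) {δ : ℝ} (hδ : 0 < δ) :
    ∀ᶠ ε in 𝓝 (0 : ℝ), C * ε ^ γ < δ := by
  have hc : Continuous fun ε : ℝ => C * ε ^ γ := continuous_const.mul (continuous_rpow_const hγ.le)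
  have := hc.tendsto 0
  rw [zero_rpow hγ.ne', mul_zero] at this
  exact this.eventually (gt_mem_nhds hδ)

section Continuation

variable {γ u₀ : ℝ}

lemma abs_rlIntegral_comp_IccExtend_sub_le (hγ : 0 < γ) {F : ℝ → ℝ} {K : ℝ≥0}
    (hF : LipschitzWith K F) {T₀ A : ℝ} (hT₀ : 0 ≤ T₀) (hA : T₀ ≤ A) (hA0 : 0 ≤ A)
    {v v' : C(Icc 0 A, ℝ)}
    (heq : ∀ x : Icc 0 A, (x : ℝ) ≤ T₀ → v x = v' x) {t : ℝ} (ht : t ∈ Icc 0 A) :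
    |rlIntegral γ (F ∘ IccExtend hA0 v) t - rlIntegral γ (F ∘ IccExtend hA0 v') t| ≤
      K * ((A - T₀) ^ γ / γ) * dist v v' := by
  have hT : min t T₀ ≤ t := min_le_left _ _
  have hle : (t - min t T₀) ^ γ ≤ (A - T₀) ^ γ := rpow_le_rpow (by linarith)
    (by rcases le_total t T₀ with h | h <;> simp [h] <;> linarith [ht.2]) hγ.le
  refine (abs_rlIntegral_comp_sub_le (d := dist v v') hγ hF (le_min ht.1 hT₀) hT
    (continuous_IccExtend_iff.2 v.continuous) (continuous_IccExtend_iff.2 v'.continuous)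
    (fun s hs => ?_) fun s => ?_).trans ?_
  · have hsA : s ∈ Icc 0 A := ⟨hs.1, hs.2.trans (hT.trans ht.2)⟩
    rw [IccExtend_of_mem hA0 _ hsA, IccExtend_of_mem hA0 _ hsA]
    exact heq _ (hs.2.trans (min_le_right _ _))
  · rw [← dist_eq]
    exact ContinuousMap.dist_apply_le_dist _
  · rw [mul_right_comm]
    gcongr

lemma exists_continuation_of_lipschitzWith (hγ : γ ∈ Ioo (0 : ℝ) 1) {F : ℝ → ℝ} {K : ℝ≥0}
    (hF : LipschitzWith K F) {T₀ A : ℝ} (hT₀ : 0 ≤ T₀) (hA : T₀ ≤ A)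
    (hsmall : 1 / Gamma γ * (K * ((A - T₀) ^ γ / γ)) ≤ 1 / 2) {w : ℝ → ℝ}
    (hwc : ContinuousOn w (Icc 0 T₀))
    (hweq : ∀ t ∈ Icc 0 T₀, w t = u₀ + 1 / Gamma γ * rlIntegral γ (F ∘ w) t) :
    ∃ v : ℝ → ℝ, Continuous v ∧ EqOn v w (Icc 0 T₀) ∧
      ∀ t ∈ Icc 0 A, v t = u₀ + 1 / Gamma γ * rlIntegral γ (F ∘ v) t := by
  have hA0 : 0 ≤ A := hT₀.trans hA
  have hcγ : 0 < 1 / Gamma γ := one_div_pos.2 (Gamma_pos_of_pos hγ.1)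
  have hext : ∀ v : C(Icc 0 A, ℝ), Continuous (IccExtend hA0 v) := fun v =>
    continuous_IccExtend_iff.2 v.continuous
  let Φ : C(Icc 0 A, ℝ) → C(Icc 0 A, ℝ) := fun v =>
    ⟨(Icc 0 A).domRestrict fun t => u₀ + 1 / Gamma γ * rlIntegral γ (F ∘ IccExtend hA0 v) t,
      (continuousOn_const.add (continuousOn_const.mul (continuousOn_rlIntegral hγ
        (hF.continuous.comp (hext v)).continuousOn))).domRestrict⟩
  let Y : Set C(Icc 0 A, ℝ) := {v | ∀ x : Icc 0 A, (x : ℝ) ≤ T₀ → v x = w x}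
  have hY : IsClosed Y := by
    simp only [Y, ofPred_forall]
    exact isClosed_iInter fun x => isClosed_iInter fun _ =>
      isClosed_eq (continuous_eval_const x) continuous_const
  have hext_w : ∀ v ∈ Y, EqOn (IccExtend hA0 v) w (Icc 0 T₀) := fun v hv s hs => by
    rw [IccExtend_of_mem hA0 _ ⟨hs.1, hs.2.trans hA⟩]
    exact hv _ hs.2
  have hmaps : MapsTo Φ Y Y := fun v hv x hx => by
    change u₀ + 1 / Gamma γ * rlIntegral γ (F ∘ IccExtend hA0 v) x = w x
    rw [hweq x ⟨x.2.1, hx⟩, rlIntegral_congr (g₁ := F ∘ IccExtend hA0 v) (g₂ := F ∘ w) x.2.1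
      fun s hs => congrArg F (hext_w v hv ⟨hs.1, hs.2.trans hx⟩)]
  have hcontr : ContractingWith (1 / 2) (hmaps.restrict Φ Y Y) := by
    refine ⟨NNReal.half_lt_self one_ne_zero, LipschitzWith.of_dist_le_mul fun v v' => ?_⟩
    rw [Subtype.dist_eq, Subtype.dist_eq, ContinuousMap.dist_le (by positivity)]
    intro x
    have hd := abs_rlIntegral_comp_IccExtend_sub_le hγ.1 hF hT₀ hA hA0
      (fun x hx => (v.2 x hx).trans (v'.2 x hx).symm) x.2
    change |(u₀ + _) - (u₀ + _)| ≤ _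
    rw [add_sub_add_left_eq_sub, ← mul_sub, abs_mul, abs_of_pos hcγ, ← Subtype.dist_eq]
    calc _ ≤ 1 / Gamma γ * (K * ((A - T₀) ^ γ / γ) * dist v v') :=
        mul_le_mul_of_nonneg_left hd hcγ.le
      _ ≤ _ := by rw [← mul_assoc]; push_cast; gcongr
  have hv₀ : (⟨fun x => w (min (x : ℝ) T₀), hwc.comp_continuous
      (continuous_subtype_val.min continuous_const)
      fun x => ⟨le_min x.2.1 hT₀, min_le_right _ _⟩⟩ : C(Icc 0 A, ℝ)) ∈ Y :=
    fun x hx => by simp [min_eq_left hx]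
  obtain ⟨y, hyY, hyfix, -⟩ :=
    hcontr.exists_fixedPoint' hY.isComplete hmaps hv₀ (edist_ne_top _ _)
  refine ⟨IccExtend hA0 y, hext y, hext_w y hyY, fun t ht => ?_⟩
  rw [IccExtend_of_mem hA0 _ ht]
  exact (ContinuousMap.congr_fun hyfix ⟨t, ht⟩).symm

lemma abs_sub_le_of_volterra (hγ : γ ∈ Ioo (0 : ℝ) 1) {F : ℝ → ℝ} (hF : Continuous F) {M : ℝ}
    (hFM : ∀ x, |F x| ≤ M) {A : ℝ} {v : ℝ → ℝ} (hv : Continuous v)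
    (hveq : ∀ t ∈ Icc 0 A, v t = u₀ + 1 / Gamma γ * rlIntegral γ (F ∘ v) t) {t₁ t₂ : ℝ}
    (h0 : 0 ≤ t₁) (h12 : t₁ ≤ t₂) (h2 : t₂ ≤ A) :
    |v t₂ - v t₁| ≤ 1 / Gamma γ * (2 * M / γ) * (t₂ - t₁) ^ γ := by
  rw [hveq t₂ ⟨h0.trans h12, h2⟩, hveq t₁ ⟨h0, h12.trans h2⟩, add_sub_add_left_eq_sub, ← mul_sub,
    abs_mul, abs_of_pos (one_div_pos.2 (Gamma_pos_of_pos hγ.1)), mul_assoc]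
  exact mul_le_mul_of_nonneg_left
    (abs_rlIntegral_sub_le hγ h0 h12 (hF.comp hv).continuousOn fun s _ => hFM _)
    (one_div_pos.2 (Gamma_pos_of_pos hγ.1)).le

variable {f : ℝ → ℝ}

lemma exists_isSolUpTo_gt (hγ : γ ∈ Ioo (0 : ℝ) 1) (hf : LocallyLipschitzOn (Ioi 0) f) {T₀ : ℝ}
    (hT₀ : 0 ≤ T₀) {w : ℝ → ℝ} (hwc : ContinuousOn w (Icc 0 T₀))
    (hwpos : ∀ t ∈ Icc 0 T₀, 0 < w t)
    (hweq : ∀ t ∈ Icc 0 T₀, w t = u₀ + 1 / Gamma γ * rlIntegral γ (f ∘ w) t) :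
    ∃ T > T₀, ∃ v : ℝ → ℝ, IsSolUpTo γ f (Ioi 0) u₀ v (ENNReal.ofReal T) := by
  obtain ⟨t₀, ht₀, hmin⟩ := isCompact_Icc.exists_isMinOn (nonempty_Icc.2 hT₀) hwc
  obtain ⟨W, hW⟩ := isCompact_Icc.exists_bound_of_continuousOn hwc
  set m := w t₀
  have hm : 0 < m := hwpos t₀ ht₀
  have hwm : ∀ t ∈ Icc 0 T₀, m ≤ w t ∧ w t ≤ W := fun t ht =>
    ⟨isMinOn_iff.1 hmin t ht, (le_abs_self _).trans (hW t ht)⟩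
  -- the continuation stays within `m / 2` of `w T₀`, where `f` is Lipschitz and bounded
  obtain ⟨F, K, M, hFK, hFM, hFf⟩ := hf.exists_lipschitzWith_bounded_eqOn
    (b := W + m / 2) (by linarith [hwm t₀ ht₀]) fun x hx => (half_pos hm).trans_le hx.1
  have hwF : ∀ t ∈ Icc 0 T₀, w t ∈ Icc (m / 2) (W + m / 2) := fun t ht =>
    ⟨by linarith [hwm t ht], by linarith [hwm t ht]⟩
  have hweqF : ∀ t ∈ Icc 0 T₀, w t = u₀ + 1 / Gamma γ * rlIntegral γ (F ∘ w) t := fun t ht => by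
    rw [hweq t ht, rlIntegral_congr (g₁ := f ∘ w) (g₂ := F ∘ w) ht.1 fun s hs =>
      (hFf (hwF s ⟨hs.1, hs.2.trans ht.2⟩)).symm]
  obtain ⟨ε, ⟨hεK, hεM⟩, hε⟩ :=
    ((((eventually_mul_rpow_lt hγ.1 (1 / Gamma γ * K / γ) one_half_pos).and
      (eventually_mul_rpow_lt hγ.1 (1 / Gamma γ * (2 * M / γ)) (half_pos hm))).filter_mono
      nhdsWithin_le_nhds).and (self_mem_nhdsWithin (s := Ioi 0))).exists
  have hε0 : 0 < ε := hε
  obtain ⟨v, hvc, hvw, hveq⟩ := exists_continuation_of_lipschitzWith hγ hFK hT₀ (A := T₀ + ε)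
    (by linarith) (by rw [add_sub_cancel_left]; exact (le_of_eq (by ring)).trans hεK.le) hwc hweqF
  have hvm : ∀ t ∈ Icc 0 (T₀ + ε), v t ∈ Icc (m / 2) (W + m / 2) := by
    intro t ht
    rcases le_total t T₀ with htT | htT
    · exact hvw ⟨ht.1, htT⟩ ▸ hwF t ⟨ht.1, htT⟩
    have hclose := abs_sub_le_of_volterra hγ hFK.continuous hFM hvc hveq hT₀ htT ht.2
    have htε : (t - T₀) ^ γ ≤ ε ^ γ := rpow_le_rpow (by linarith) (by linarith [ht.2]) hγ.1.le
    have hC : 0 ≤ 1 / Gamma γ * (2 * M / γ) := mul_nonneg (one_div_pos.2 (Gamma_pos_of_pos hγ.1)).le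
      (div_nonneg (by linarith [(abs_nonneg _).trans (hFM 0)]) hγ.1.le)
    have hvT₀ : m ≤ v T₀ ∧ v T₀ ≤ W := hvw ⟨hT₀, le_rfl⟩ ▸ hwm T₀ ⟨hT₀, le_rfl⟩
    have := abs_le.1 (hclose.trans ((mul_le_mul_of_nonneg_left htε hC).trans hεM.le))
    constructor <;> linarith
  refine ⟨T₀ + ε, by linarith, v, ?_, hvc.continuousOn, fun t ht0 ht => ?_, fun t ht0 ht => ?_⟩
  · rw [hvw ⟨le_rfl, hT₀⟩, hweq 0 ⟨le_rfl, hT₀⟩, rlIntegral, integral_same, mul_zero, add_zero]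
  all_goals have htA : t ∈ Icc 0 (T₀ + ε) :=
    ⟨ht0, ((ENNReal.ofReal_lt_ofReal_iff (by linarith)).1 ht).le⟩
  · exact (half_pos hm).trans_le (hvm t htA).1
  · rw [hveq t htA, rlIntegral_congr (g₁ := F ∘ v) (g₂ := f ∘ v) ht0 fun s hs =>
      hFf (hvm s ⟨hs.1, hs.2.trans htA.2⟩)]
    rfl

end Continuation

lemma MonotoneOn.exists_tendsto_nhdsLT {u : ℝ → ℝ} {a b : ℝ} (hab : a < b)
    (hu : MonotoneOn u (Ico a b))
    (hbdd : BddAbove (u '' Ico a b)) : ∃ L, Tendsto u (𝓝[<] b) (𝓝 L) := by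
  have hmono : MonotoneOn (fun t => u (max t a)) (Iio b) := fun x hx y hy hxy =>
    hu ⟨le_max_right _ _, max_lt hx hab⟩ ⟨le_max_right _ _, max_lt hy hab⟩ (max_le_max_right a hxy)
  have hbdd' : BddAbove ((fun t => u (max t a)) '' Iio b) :=
    hbdd.mono <| by
      rintro _ ⟨t, ht, rfl⟩
      exact mem_image_of_mem u ⟨le_max_right _ _, max_lt ht hab⟩
  refine ⟨_, (hmono.tendsto_nhdsLT hbdd').congr' ?_⟩
  filter_upwards [Ioo_mem_nhdsLT hab] with t ht
  rw [max_eq_left ht.1.le]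

lemma MonotoneOn.tendsto_nhdsLT_atTop {u : ℝ → ℝ} {a b : ℝ} (hu : MonotoneOn u (Ico a b))
    (hbdd : ¬BddAbove (u '' Ico a b)) : Tendsto u (𝓝[<] b) atTop := by
  refine tendsto_atTop.2 fun C => ?_
  obtain ⟨_, ⟨x, hx, rfl⟩, hCx⟩ := not_bddAbove_iff.1 hbdd C
  filter_upwards [Ioo_mem_nhdsLT hx.2] with t ht
  exact hCx.le.trans (hu hx ⟨hx.1.trans ht.1.le, ht.2⟩ ht.1.le)

section MaxTime

variable {γ u₀ : ℝ} {f u : ℝ → ℝ}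

lemma le_maxTime {D : Set ℝ} {T : ℝ≥0∞} (hu : IsSolUpTo γ f D u₀ u T) : T ≤ maxTime γ f D u₀ :=
  le_sSup ⟨u, hu⟩

lemma maxTime_pos (hγ : γ ∈ Ioo (0 : ℝ) 1) (hf : LocallyLipschitzOn (Ioi 0) f) (hu₀ : 0 < u₀) :
    0 < maxTime γ f (Ioi 0) u₀ := by
  obtain ⟨T, hT, v, hv⟩ := exists_isSolUpTo_gt (u₀ := u₀) (w := fun _ => u₀) hγ hf le_rfl
    continuousOn_const (fun _ _ => hu₀) fun t ht => by
      rw [le_antisymm ht.2 ht.1, rlIntegral, integral_same, mul_zero, add_zero]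
  exact (ENNReal.ofReal_pos.2 hT).trans_le (le_maxTime hv)

lemma IsSolUpTo.exists_gt_of_tendsto (hγ : γ ∈ Ioo (0 : ℝ) 1) (hf : LocallyLipschitzOn (Ioi 0) f)
    {T L : ℝ} (hT : 0 < T) (hu : IsSolUpTo γ f (Ioi 0) u₀ u (ENNReal.ofReal T))
    (hL : Tendsto u (𝓝[<] T) (𝓝 L)) (hL0 : 0 < L) :
    ∃ T' > T, ∃ v : ℝ → ℝ, IsSolUpTo γ f (Ioi 0) u₀ v (ENNReal.ofReal T') := by
  have hlt : ∀ t < T, ENNReal.ofReal t < ENNReal.ofReal T := fun t ht =>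
    (ENNReal.ofReal_lt_ofReal_iff hT).2 ht
  have hwT : ContinuousWithinAt (Function.update u T L) (Icc 0 T) T := by
    rw [continuousWithinAt_update_same, Icc_sdiff_right, nhdsWithin_Ico_eq_nhdsLT hT]
    exact hL
  have hwT0 : 0 < Function.update u T L T := by rwa [Function.update_self]
  set w := Function.update u T L
  have hwu : ∀ t < T, w t = u t := fun t ht => Function.update_of_ne ht.ne _ _
  have hwc : ContinuousOn w (Icc 0 T) := by
    intro t ht
    rcases ht.2.lt_or_eq with htT | rfl
    · have hmid : t < (t + T) / 2 := by linarith
      refine (((hu.continuousOn_Icc (hlt _ (by linarith))) t ⟨ht.1, hmid.le⟩).congr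
        (fun s hs => hwu s (by linarith [hs.2])) (hwu t htT)).mono_of_mem_nhdsWithin ?_
      exact mem_nhdsWithin.2 ⟨Iio ((t + T) / 2), isOpen_Iio, hmid, fun s hs => ⟨hs.2.1, hs.1.le⟩⟩
    · exact hwT
  have hwpos : ∀ t ∈ Icc 0 T, 0 < w t := fun t ht => by
    rcases ht.2.lt_or_eq with htT | rfl
    · rw [hwu t htT]
      exact hu.mem_of_mem_Icc (hlt t htT) ⟨ht.1, le_rfl⟩
    · exact hwT0
  have hg : ContinuousOn (f ∘ w) (Icc 0 T) := hf.continuousOn.comp hwc fun t ht => hwpos t ht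
  -- the integral equation passes to the endpoint by continuity of both sides
  refine exists_isSolUpTo_gt hγ hf hT.le hwc hwpos (EqOn.of_subset_closure (fun t ht => ?_) hwc
    (continuousOn_const.add (continuousOn_const.mul (continuousOn_rlIntegral hγ hg)))
    Ico_subset_Icc_self (by rw [closure_Ico hT.ne]))
  rw [hwu t ht.2, hu.eq_of_mem_Icc (hlt t ht.2) ⟨ht.1, le_rfl⟩,
    rlIntegral_congr (g₁ := f ∘ u) (g₂ := f ∘ w) ht.1 fun s hs => by
      simp only [Function.comp, hwu s (hs.2.trans_lt ht.2)]]

end MaxTime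

section BlowUp

variable {γ u₀ : ℝ} {f u : ℝ → ℝ} (hmono : MonotoneOn f (Ioi 0)) (hfu₀ : 0 < f u₀)
include hmono hfu₀

lemma IsSolUpTo.tendsto_atTop (hγ : 0 < γ) (hfc : ContinuousOn f (Ioi 0))
    (hu : IsSolUpTo γ f (Ioi 0) u₀ u ⊤) : Tendsto u atTop atTop := by
  have hC : 0 < 1 / Gamma γ * (f u₀ / γ) :=
    mul_pos (one_div_pos.2 (Gamma_pos_of_pos hγ)) (div_pos hfu₀ hγ)
  have hlow : Tendsto (fun t : ℝ => u₀ + 1 / Gamma γ * (f u₀ * (t ^ γ / γ))) atTop atTop :=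
    tendsto_atTop_add_const_left _ u₀ <|
      ((tendsto_rpow_atTop hγ).const_mul_atTop hC).congr fun t => by ring
  exact tendsto_atTop_mono' atTop ((eventually_ge_atTop 0).mono fun t ht =>
    hu.add_le_apply hγ hfc hmono hfu₀ ENNReal.ofReal_lt_top ht) hlow

lemma IsSolUpTo.tendsto_nhdsLT_maxTime (hγ : γ ∈ Ioo (0 : ℝ) 1) (hf : LocallyLipschitzOn (Ioi 0) f)
    (hu₀ : 0 < u₀) (hu : IsSolUpTo γ f (Ioi 0) u₀ u (maxTime γ f (Ioi 0) u₀))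
    (hne : maxTime γ f (Ioi 0) u₀ ≠ ⊤) :
    Tendsto u (𝓝[<] (maxTime γ f (Ioi 0) u₀).toReal) atTop := by
  set T := (maxTime γ f (Ioi 0) u₀).toReal
  have hT : ENNReal.ofReal T = maxTime γ f (Ioi 0) u₀ := ENNReal.ofReal_toReal hne
  have hT0 : 0 < T := ENNReal.toReal_pos (maxTime_pos hγ hf hu₀).ne' hne
  have hlt : ∀ t < T, ENNReal.ofReal t < ENNReal.ofReal T := fun t ht =>
    (ENNReal.ofReal_lt_ofReal_iff hT0).2 ht
  rw [← hT] at hu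
  have hmonT : MonotoneOn u (Ico 0 T) :=
    (hu.strictMonoOn hγ.1 hf.continuousOn hmono hfu₀).monotoneOn.mono fun t ht => ⟨ht.1, hlt t ht.2⟩
  refine hmonT.tendsto_nhdsLT_atTop fun hbdd => ?_
  -- a bounded solution has a positive limit at `T`, so it could be continued past `T`
  obtain ⟨L, hL⟩ := hmonT.exists_tendsto_nhdsLT hT0 hbdd
  have hL0 : u₀ ≤ L := ge_of_tendsto hL <| by
    filter_upwards [Ioo_mem_nhdsLT hT0] with t ht
    exact hu.le_apply hγ.1 hf.continuousOn hmono hfu₀ (hlt t ht.2) ht.1.le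
  obtain ⟨T', hT', v, hv⟩ := hu.exists_gt_of_tendsto hγ hf hT0 hL (hu₀.trans_le hL0)
  have hle := le_maxTime hv
  rw [← hT, ENNReal.ofReal_le_ofReal_iff hT0.le] at hle
  linarith

end BlowUp

/-- for non-decreasing `f` with `f(u₀) > 0`, the solution is
non-decreasing and tends to `+∞` at the maximal time. -/
theorem stmt6 (γ u₀ : ℝ) (f : ℝ → ℝ) (u : ℝ → ℝ)
    (hγ : γ ∈ Set.Ioo (0:ℝ) 1)
    (hf : ∀ x ∈ Set.Ioi (0:ℝ), ∃ K : NNReal, ∃ s ∈ 𝓝[Set.Ioi (0:ℝ)] x, LipschitzOnWith K f s)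
    (hmono : MonotoneOn f (Set.Ioi 0))
    (hu₀ : 0 < u₀) (hfu₀ : 0 < f u₀)
    (hu : IsSolUpTo γ f (Set.Ioi 0) u₀ u (maxTime γ f (Set.Ioi 0) u₀)) :
    MonotoneOn u {t : ℝ | 0 < t ∧ ENNReal.ofReal t < maxTime γ f (Set.Ioi 0) u₀} ∧
    (maxTime γ f (Set.Ioi 0) u₀ = ⊤ → Tendsto u atTop atTop) ∧
    (maxTime γ f (Set.Ioi 0) u₀ ≠ ⊤ →
      Tendsto u (𝓝[<] (maxTime γ f (Set.Ioi 0) u₀).toReal) atTop) := by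
  have hfl : LocallyLipschitzOn (Ioi 0) f := hf
  refine ⟨(hu.strictMonoOn hγ.1 hfl.continuousOn hmono hfu₀).monotoneOn.mono
    fun t ht => ⟨ht.1.le, ht.2⟩, fun htop => ?_, hu.tendsto_nhdsLT_maxTime hmono hfu₀ hγ hfl hu₀⟩
  rw [htop] at hu
  exact hu.tendsto_atTop hmono hfu₀ hγ.1 hfl.continuousOn
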